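/- With the convention 0^0 = 1, the determinant of the matrix 𝔅 equals (n+1) · γ^{2r} · (γ² − r − 1)^{n−r}. -/
import Mathlib


/-- The Cartan matrix of `sl(n+1, ℂ)` in 1-based indices:
`2` on the diagonal, `-1` for `|i - j| = 1`, and `0` otherwise. -/
noncomputable def cartanEntry (i j : ℕ) : ℂ :=
  if i = j then 2 else if i + 1 = j ∨ j + 1 = i then -1 else 0

/-- The entries of the matrix `𝔅` (1-based indices):
`𝔅_{ij} = (A_n)_{ij} (γ² − δ_{i>r} δ_{j>r} (r+1) + (r/2) δ_{i,r+1} δ_{j,r+1})`. -/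
noncomputable def Bentry (r : ℕ) (γ : ℂ) (i j : ℕ) : ℂ :=
  cartanEntry i j *
    (γ ^ 2 - (if r < i then 1 else 0) * (if r < j then 1 else 0) * ((r : ℂ) + 1)
      + ((r : ℂ) / 2) * (if i = r + 1 then 1 else 0) * (if j = r + 1 then 1 else 0))

/-- The matrix `𝔅` as an `n × n` complex matrix. -/
noncomputable def Bmatrix (n r : ℕ) (γ : ℂ) : Matrix (Fin n) (Fin n) ℂ :=
  Matrix.of fun i j => Bentry r γ (i.1 + 1) (j.1 + 1)

/-- with the convention `0^0 = 1`,
`det 𝔅 = (n+1) · γ^{2r} · (γ² − r − 1)^{n−r}`. -/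

lemma detB (f : ℕ → ℕ → ℂ)
    (hf : ∀ i j : ℕ, i + 1 < j ∨ j + 1 < i → f i j = 0) (n : ℕ) :
    ((Matrix.of fun i j : Fin (n + 2) => f i j).submatrix (Fin.last (n+1)).succAbove
        ((Fin.last n).castSucc).succAbove).det
      = f n (n+1) * (Matrix.of fun i j : Fin n => f i j).det := by
  set B := (Matrix.of fun i j : Fin (n + 2) => f i j).submatrix (Fin.last (n+1)).succAbove
        ((Fin.last n).castSucc).succAbove with hB
  have hBval : ∀ i j : Fin (n+1), B i j = f i.1 (if j.1 < n then j.1 else j.1 + 1) := by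
    intro i j
    simp only [hB, Matrix.submatrix_apply, Matrix.of_apply, Fin.succAbove_last,
      Fin.coe_castSucc]
    congr 1
    rcases Nat.lt_or_ge j.1 n with h | h
    · rw [Fin.succAbove_of_castSucc_lt _ _ (by simp [Fin.lt_def, h]), if_pos h,
        Fin.coe_castSucc]
    · rw [Fin.succAbove_of_le_castSucc _ _ (by simp [Fin.le_def]; omega),
        if_neg (by omega), Fin.val_succ]
  rw [Matrix.det_succ_column _ (Fin.last n)]
  rw [Fin.sum_univ_castSucc]
  have h0 : ∀ i : Fin n, (-1 : ℂ) ^ (((i.castSucc : Fin (n+1)) : ℕ) + ((Fin.last n : Fin (n+1)) : ℕ))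
      * B i.castSucc (Fin.last n) * ((B.submatrix (i.castSucc).succAbove (Fin.last n).succAbove)).det = 0 := by
    intro i
    have h1 : B i.castSucc (Fin.last n) = f i.1 (n + 1) := by
      rw [hBval]; norm_num
    have : B i.castSucc (Fin.last n) = 0 := by rw [h1]; exact hf _ _ (by omega)
    simp [this]
  rw [Finset.sum_congr rfl (fun i _ => h0 i), Finset.sum_const_zero, zero_add]
  have hsign : (-1 : ℂ) ^ (((Fin.last n : Fin (n+1)) : ℕ) + ((Fin.last n : Fin (n+1)) : ℕ)) = 1 := by
    rw [Fin.val_last, show n + n = 2 * n by ring, pow_mul]; norm_num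
  have hentry : B (Fin.last n) (Fin.last n) = f n (n+1) := by
    rw [hBval]; simp
  have hsub : B.submatrix (Fin.last n).succAbove (Fin.last n).succAbove
      = Matrix.of fun i j : Fin n => f i j := by
    ext i j
    rw [Matrix.submatrix_apply, Fin.succAbove_last, hBval]
    simp [Fin.is_lt]
  rw [hsign, hentry, hsub, one_mul]

lemma tridiag_rec (f : ℕ → ℕ → ℂ)
    (hf : ∀ i j : ℕ, i + 1 < j ∨ j + 1 < i → f i j = 0) (n : ℕ) :
    (Matrix.of fun i j : Fin (n + 2) => f i j).det
      = f (n+1) (n+1) * (Matrix.of fun i j : Fin (n + 1) => f i j).det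
        - f (n+1) n * f n (n+1) * (Matrix.of fun i j : Fin n => f i j).det := by
  rw [Matrix.det_succ_row _ (Fin.last (n+1))]
  rw [Fin.sum_univ_castSucc, Fin.sum_univ_castSucc]
  have h0 : ∀ j : Fin n, (-1 : ℂ) ^ ((Fin.last (n+1) : ℕ) + ((j.castSucc.castSucc : Fin (n+2)) : ℕ))
      * (Matrix.of fun i j : Fin (n + 2) => f i j) (Fin.last (n+1)) j.castSucc.castSucc
      * ((Matrix.of fun i j : Fin (n + 2) => f i j).submatrix (Fin.last (n+1)).succAbove
          (j.castSucc.castSucc).succAbove).det = 0 := by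
    intro j
    have : f (n+1) j.1 = 0 := hf _ _ (by omega)
    simp [this]
  rw [Finset.sum_congr rfl (fun j _ => h0 j), Finset.sum_const_zero, zero_add]
  have hsign1 : (-1 : ℂ) ^ ((Fin.last (n+1) : ℕ) + (((Fin.last n).castSucc : Fin (n+2)) : ℕ)) = -1 := by
    simp only [Fin.val_last, Fin.coe_castSucc]
    rw [show n + 1 + n = 2 * n + 1 by ring, pow_succ, pow_mul]; norm_num
  have hsign2 : (-1 : ℂ) ^ ((Fin.last (n+1) : ℕ) + ((Fin.last (n+1) : Fin (n+2)) : ℕ)) = 1 := by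
    simp only [Fin.val_last]
    rw [show n + 1 + (n + 1) = 2 * (n + 1) by ring, pow_mul]; norm_num
  have he1 : (Matrix.of fun i j : Fin (n + 2) => f i j) (Fin.last (n+1)) (Fin.last n).castSucc
      = f (n+1) n := by simp
  have he2 : (Matrix.of fun i j : Fin (n + 2) => f i j) (Fin.last (n+1)) (Fin.last (n+1))
      = f (n+1) (n+1) := by simp
  have hsub2 : (Matrix.of fun i j : Fin (n + 2) => f i j).submatrix (Fin.last (n+1)).succAbove
      (Fin.last (n+1)).succAbove = Matrix.of fun i j : Fin (n+1) => f i j := by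
    ext i j
    rw [Matrix.submatrix_apply, Fin.succAbove_last]
    simp
  rw [hsign1, hsign2, he1, he2, hsub2, detB f hf n]
  ring

lemma Bentry_eval (r : ℕ) (γ : ℂ) (i j : ℕ) :
    Bentry r γ i j = (if i = j then 2 else if i + 1 = j ∨ j + 1 = i then -1 else 0) *
      (γ ^ 2 - (if r < i then 1 else 0) * (if r < j then 1 else 0) * ((r : ℂ) + 1)
        + ((r : ℂ) / 2) * (if i = r + 1 then 1 else 0) * (if j = r + 1 then 1 else 0)) := rfl

lemma Bentry_tri (r : ℕ) (γ : ℂ) : ∀ i j : ℕ, i + 1 < j ∨ j + 1 < i →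
    Bentry r γ (i + 1) (j + 1) = 0 := by
  intro i j h
  rw [Bentry_eval, if_neg (by omega : ¬ i + 1 = j + 1),
    if_neg (by omega : ¬ (i + 1 + 1 = j + 1 ∨ j + 1 + 1 = i + 1)), zero_mul]

noncomputable def Dd (r : ℕ) (γ : ℂ) (n : ℕ) : ℂ :=
  (Matrix.of fun i j : Fin n => Bentry r γ (i.1 + 1) (j.1 + 1)).det

lemma Drec (r : ℕ) (γ : ℂ) (n : ℕ) :
    Dd r γ (n + 2) = Bentry r γ (n+2) (n+2) * Dd r γ (n+1)
      - Bentry r γ (n+2) (n+1) * Bentry r γ (n+1) (n+2) * Dd r γ n :=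
  tridiag_rec (fun i j => Bentry r γ (i + 1) (j + 1)) (Bentry_tri r γ) n

lemma Done (r : ℕ) (γ : ℂ) : Dd r γ 1 = Bentry r γ 1 1 := by
  rw [Dd, Matrix.det_fin_one]; rfl

lemma Dbase (r : ℕ) (γ : ℂ) : ∀ k, k ≤ r → Dd r γ k = ((k : ℂ) + 1) * γ ^ (2 * k) := by
  intro k
  induction k using Nat.strong_induction_on with
  | _ k ih =>
    match k, ih with
    | 0, _ => intro _; simp [Dd]
    | 1, _ =>
      intro h
      rw [Done, Bentry_eval, if_pos rfl, if_neg (by omega : ¬ r < 1),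
        if_neg (by omega : ¬ (1 : ℕ) = r + 1)]
      push_cast; ring
    | (m+2), ih =>
      intro h
      have d : Bentry r γ (m+2) (m+2) = 2 * γ ^ 2 := by
        rw [Bentry_eval, if_pos rfl, if_neg (by omega : ¬ r < m + 2),
          if_neg (by omega : ¬ m + 2 = r + 1)]
        ring
      have o1 : Bentry r γ (m+2) (m+1) = -(γ ^ 2) := by
        rw [Bentry_eval, if_neg (by omega : ¬ m + 2 = m + 1),
          if_pos (Or.inr rfl), if_neg (by omega : ¬ r < m + 2),
          if_neg (by omega : ¬ r < m + 1), if_neg (by omega : ¬ m + 2 = r + 1),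
          if_neg (by omega : ¬ m + 1 = r + 1)]
        ring
      have o2 : Bentry r γ (m+1) (m+2) = -(γ ^ 2) := by
        rw [Bentry_eval, if_neg (by omega : ¬ m + 1 = m + 2),
          if_pos (Or.inl rfl), if_neg (by omega : ¬ r < m + 2),
          if_neg (by omega : ¬ r < m + 1), if_neg (by omega : ¬ m + 2 = r + 1),
          if_neg (by omega : ¬ m + 1 = r + 1)]
        ring
      rw [Drec, d, o1, o2, ih (m+1) (by omega) (by omega), ih m (by omega) (by omega)]
      rw [show 2 * (m + 2) = 2 * (m + 1) + 2 by ring, show 2 * (m + 1) = 2 * m + 2 by ring,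
        pow_add, pow_add]
      push_cast; ring

lemma Dmain (r : ℕ) (γ : ℂ) : ∀ m, Dd r γ (r + m)
    = ((r : ℂ) + (m : ℂ) + 1) * γ ^ (2 * r) * (γ ^ 2 - (r : ℂ) - 1) ^ m := by
  intro m
  induction m using Nat.strong_induction_on with
  | _ m ih =>
    match m, ih with
    | 0, _ => rw [Nat.add_zero, Dbase r γ r le_rfl]; push_cast; ring
    | 1, _ =>
      match r with
      | 0 =>
        rw [show (0:ℕ) + 1 = 1 from rfl, Done, Bentry_eval, if_pos rfl,
          if_pos (by omega : (0:ℕ) < 1), if_pos rfl]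
        push_cast; ring
      | (s+1) =>
        have d : Bentry (s+1) γ (s+2) (s+2)
            = 2 * (γ ^ 2 - ((s:ℂ) + 2) + ((s:ℂ) + 1)/2) := by
          rw [Bentry_eval, if_pos rfl, if_pos (by omega : s + 1 < s + 2),
            if_pos (by omega : s + 2 = s + 1 + 1)]
          push_cast; ring
        have o1 : Bentry (s+1) γ (s+2) (s+1) = -(γ ^ 2) := by
          rw [Bentry_eval, if_neg (by omega : ¬ s + 2 = s + 1),
            if_pos (Or.inr rfl), if_pos (by omega : s + 1 < s + 2),
            if_neg (by omega : ¬ s + 1 < s + 1), if_pos (by omega : s + 2 = s + 1 + 1),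
            if_neg (by omega : ¬ s + 1 = s + 1 + 1)]
          ring
        have o2 : Bentry (s+1) γ (s+1) (s+2) = -(γ ^ 2) := by
          rw [Bentry_eval, if_neg (by omega : ¬ s + 1 = s + 2),
            if_pos (Or.inl rfl), if_pos (by omega : s + 1 < s + 2),
            if_neg (by omega : ¬ s + 1 < s + 1), if_pos (by omega : s + 2 = s + 1 + 1),
            if_neg (by omega : ¬ s + 1 = s + 1 + 1)]
          ring
        rw [show s + 1 + 1 = s + 2 by omega, Drec, d, o1, o2,
          Dbase (s+1) γ (s+1) le_rfl, Dbase (s+1) γ s (by omega),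
          show 2 * (s + 1) = 2 * s + 2 by ring, pow_add]
        push_cast; ring
    | (m+2), ih =>
      have hd : Bentry r γ (r+m+2) (r+m+2) = 2 * (γ ^ 2 - ((r:ℂ) + 1)) := by
        rw [Bentry_eval, if_pos rfl, if_pos (by omega : r < r + m + 2),
          if_neg (by omega : ¬ r + m + 2 = r + 1)]
        ring
      have o1 : Bentry r γ (r+m+2) (r+m+1) = -(γ ^ 2 - ((r:ℂ) + 1)) := by
        rw [Bentry_eval, if_neg (by omega : ¬ r + m + 2 = r + m + 1),
          if_pos (Or.inr rfl), if_pos (by omega : r < r + m + 2),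
          if_pos (by omega : r < r + m + 1), if_neg (by omega : ¬ r + m + 2 = r + 1)]
        ring
      have o2 : Bentry r γ (r+m+1) (r+m+2) = -(γ ^ 2 - ((r:ℂ) + 1)) := by
        rw [Bentry_eval, if_neg (by omega : ¬ r + m + 1 = r + m + 2),
          if_pos (Or.inl rfl), if_pos (by omega : r < r + m + 2),
          if_pos (by omega : r < r + m + 1), if_neg (by omega : ¬ r + m + 2 = r + 1)]
        ring
      rw [show r + (m+2) = (r + m) + 2 by ring, Drec,
        show r + m + 1 + 1 = r + m + 2 by ring,
        show r + m + 1 = r + (m + 1) by ring, ih (m+1) (by omega),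
        show r + (m+1) = r + m + 1 by ring, hd, o1, o2, ih m (by omega)]
      push_cast; ring

theorem det_Bmatrix (n r : ℕ) (γ : ℂ) (hn : 1 ≤ n) (hr : r ≤ n) :
    (Bmatrix n r γ).det = ((n : ℂ) + 1) * γ ^ (2 * r) * (γ ^ 2 - (r : ℂ) - 1) ^ (n - r) := by
  obtain ⟨m, rfl⟩ : ∃ m, n = r + m := ⟨n - r, by omega⟩
  have : (Bmatrix (r + m) r γ).det = Dd r γ (r + m) := rfl
  rw [this, Dmain r γ m, show r + m - r = m by omega]
  push_cast; ring
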